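/- For any pca A and equivalence relation ∼ on A, left-algebraicity implies right-algebraicity (if f ∼ g implies ∀z, z·f ∼ z·g, then f ∼ g implies ∀x, f·x ∼ g·x, both in the extended sense), but not conversely: there exists an equivalence relation ∼ on ℕ (on Kleene's first model K₁) that is right-algebraic but not left-algebraic. -/

import Mathlib

/-- A partial combinatory algebra: a partial binary application together with
combinators `k` and `s` satisfying the usual laws. -/
structure PCA (A : Type) where
  app : A → A → Part A
  k : A
  s : A
  k_def : ∀ a : A, (app k a).Dom
  k_eq : ∀ a b : A, (app k a).bind (fun u => app u b) = Part.some a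
  s_def : ∀ a : A, (app s a).Dom
  s_def2 : ∀ a b : A, ((app s a).bind fun u => app u b).Dom
  s_eq : ∀ a b c : A,
    (((app s a).bind fun u => app u b).bind fun u => app u c) =
      (app a c).bind fun u => (app b c).bind fun v => app u v

/-- Extension of a relation on `A` to partial values: either both are
undefined, or both are defined with related values. -/
def PartRel {A : Type} (r : A → A → Prop) (x y : Part A) : Prop :=
  (¬ x.Dom ∧ ¬ y.Dom) ∨ (∃ a ∈ x, ∃ b ∈ y, r a b)

/-- Application in Kleene's first model `K₁`: `n·m = φₙ(m)`. -/
def K1 (n m : ℕ) : Part ℕ := (Denumerable.ofNat Nat.Partrec.Code n).eval m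

/-!
Left-algebraic implies right-algebraic because evaluation at a fixed argument is itself
application by an element: `z := s·i·(k·x)`, with `i := s·k·k`, satisfies `z·a ≃ a·x`.

For the converse, take on `K₁` the relation "same partial function". It is right-algebraic
by extensionality, but every function has two distinct indices `f ≠ g`, and the partial
computable function defined exactly at `f` tells them apart.
-/

section PartRel

variable {A : Type} {r : A → A → Prop}

lemma partRel_refl (hr : Equivalence r) (x : Part A) : PartRel r x x := by
  by_cases h : x.Dom
  · exact Or.inr ⟨x.get h, Part.get_mem h, x.get h, Part.get_mem h, hr.refl _⟩
  · exact Or.inl ⟨h, h⟩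

lemma not_partRel_of_dom_of_not_dom {x y : Part A} (hx : x.Dom) (hy : ¬ y.Dom) :
    ¬ PartRel r x y := by
  rintro (⟨hx', _⟩ | ⟨_, _, b, hb, _⟩)
  · exact hx' hx
  · exact hy (Part.dom_iff_mem.2 ⟨b, hb⟩)

end PartRel

def IsRightAlgebraic {A : Type} (app : A → A → Part A) (r : A → A → Prop) : Prop :=
  ∀ f g : A, r f g → ∀ x : A, PartRel r (app f x) (app g x)

def IsLeftAlgebraic {A : Type} (app : A → A → Part A) (r : A → A → Prop) : Prop :=
  ∀ f g : A, r f g → ∀ z : A, PartRel r (app z f) (app z g)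

namespace PCA

variable {A : Type} (P : PCA A)

lemma app_get (X : Part A) (h : X.Dom) (b : A) :
    P.app (X.get h) b = X.bind fun u => P.app u b := by
  conv_rhs => rw [← Part.some_get h]
  rw [Part.bind_some]

def const (x : A) : A := (P.app P.k x).get (P.k_def x)

lemma app_k (x : A) : P.app P.k x = Part.some (P.const x) := (Part.some_get _).symm

lemma app_const (x a : A) : P.app (P.const x) a = Part.some x := by
  simpa only [app_k, Part.bind_some] using P.k_eq x a

def ident : A := ((P.app P.s P.k).bind fun u => P.app u P.k).get (P.s_def2 _ _)

lemma app_ident (a : A) : P.app P.ident a = Part.some a := by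
  rw [ident, app_get, P.s_eq, app_k, Part.bind_some, Part.bind_some, app_const]

def evalAt (x : A) : A :=
  ((P.app P.s P.ident).bind fun u => P.app u (P.const x)).get (P.s_def2 _ _)

lemma app_evalAt (x a : A) : P.app (P.evalAt x) a = P.app a x := by
  rw [evalAt, app_get, P.s_eq, app_ident, Part.bind_some, app_const, Part.bind_some]

theorem isRightAlgebraic_of_isLeftAlgebraic {r : A → A → Prop}
    (h : IsLeftAlgebraic P.app r) : IsRightAlgebraic P.app r := by
  intro f g hfg x
  simpa only [app_evalAt] using h f g hfg (P.evalAt x)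

end PCA

section K1

open Nat.Partrec

lemma K1_encode (c : Code) : K1 (Encodable.encode c) = c.eval := by
  ext1 n
  rw [K1, Denumerable.ofNat_encode]

lemma exists_K1_eq {f : ℕ →. ℕ} (hf : Nat.Partrec f) : ∃ z, K1 z = f := by
  obtain ⟨c, rfl⟩ := Code.exists_code.1 hf
  exact ⟨_, K1_encode c⟩

lemma exists_K1_dom_iff_eq (f : ℕ) : ∃ z, ∀ n, (K1 z n).Dom ↔ n = f := by
  have hp : Nat.Partrec fun n => cond (decide (n = f)) (Part.some 0) Part.none :=
    Partrec.nat_iff.1 <| Partrec.cond (Primrec.eq.comp Primrec.id (Primrec.const f)).decide.to_comp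
      (Partrec.const' _) Partrec.none
  obtain ⟨z, hz⟩ := exists_K1_eq hp
  refine ⟨z, fun n => ?_⟩
  rw [hz]
  by_cases hn : n = f <;> simp [hn]

lemma Nat.Partrec.Code.eval_comp_id (c : Code) : (c.comp Code.id).eval = c.eval := by
  funext n
  simp only [Code.eval, Code.eval_id]
  exact Part.bind_some n c.eval

lemma exists_ne_K1_eq : ∃ f g, f ≠ g ∧ K1 f = K1 g := by
  refine ⟨Encodable.encode Code.zero, Encodable.encode (Code.zero.comp Code.id), ?_, ?_⟩
  · exact fun h => by simpa using Encodable.encode_injective h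
  · rw [K1_encode, K1_encode, Code.eval_comp_id]

def K1Ext (f g : ℕ) : Prop := K1 f = K1 g

lemma equivalence_K1Ext : Equivalence K1Ext := InvImage.equivalence _ K1 eq_equivalence

lemma isRightAlgebraic_K1Ext : IsRightAlgebraic K1 K1Ext := by
  intro f g hfg x
  rw [show K1 f = K1 g from hfg]
  exact partRel_refl equivalence_K1Ext _

lemma not_isLeftAlgebraic_K1Ext : ¬ IsLeftAlgebraic K1 K1Ext := by
  intro h
  obtain ⟨f, g, hne, hfg⟩ := exists_ne_K1_eq
  obtain ⟨z, hz⟩ := exists_K1_dom_iff_eq f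
  exact not_partRel_of_dom_of_not_dom ((hz f).2 rfl) (fun hg => hne ((hz g).1 hg).symm)
    (h f g hfg z)

end K1

/-- For any pca and equivalence relation, left-algebraicity implies
right-algebraicity, but not conversely: on `K₁` there is an equivalence
relation that is right-algebraic but not left-algebraic. -/
theorem left_algebraic_implies_right_not_conversely :
    (∀ (A : Type) (P : PCA A) (r : A → A → Prop), Equivalence r →
      (∀ f g : A, r f g → ∀ z : A, PartRel r (P.app z f) (P.app z g)) →
      (∀ f g : A, r f g → ∀ x : A, PartRel r (P.app f x) (P.app g x))) ∧
    (∃ r : ℕ → ℕ → Prop, Equivalence r ∧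
      (∀ f g : ℕ, r f g → ∀ x : ℕ, PartRel r (K1 f x) (K1 g x)) ∧
      ¬ (∀ f g : ℕ, r f g → ∀ z : ℕ, PartRel r (K1 z f) (K1 z g))) :=
  ⟨fun _ P _ _ => P.isRightAlgebraic_of_isLeftAlgebraic,
    ⟨K1Ext, equivalence_K1Ext, isRightAlgebraic_K1Ext, not_isLeftAlgebraic_K1Ext⟩⟩
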